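/- Let G_1, G_2 be two complete K_n-graphs on vertex sets X_1, X_2 freely contained in a binomial B(n+1)-configuration M, with common vertex p ∈ X_1 ∩ X_2. Then every side of G_1 avoiding p crosses exactly one side of G_2, and that side of G_2 also avoids p; i.e., the sides of the two graphs missing p pair up via their intersection points, which all lie outside X_1 ∪ X_2. -/

import Mathlib

open Finset

/-- A partial Steiner triple system: a finite incidence structure given by its
set of lines (3-element subsets of the point set) such that two distinct
points lie on at most one common line. -/
structure PSTS (S : Type) where
  lines : Finset (Finset S)
  card3 : ∀ L ∈ lines, L.card = 3
  unique : ∀ L₁ ∈ lines, ∀ L₂ ∈ lines, ∀ a b : S, a ≠ b →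
    a ∈ L₁ → b ∈ L₁ → a ∈ L₂ → b ∈ L₂ → L₁ = L₂

/-- The rank of a point: the number of lines through it. -/
def pointRank {S : Type} [DecidableEq S] (M : PSTS S) (p : S) : ℕ :=
  (M.lines.filter (fun L => p ∈ L)).card

/-- A binomial B(m)-configuration: C(m,2) points, each of rank m-2, and C(m,3) lines. -/
def IsBinomial {S : Type} [Fintype S] [DecidableEq S] (M : PSTS S) (m : ℕ) : Prop :=
  Fintype.card S = Nat.choose m 2 ∧ M.lines.card = Nat.choose m 3 ∧
    ∀ p : S, pointRank M p = m - 2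

/-- `L` is a side of the complete graph on `X`: a line of `M` meeting `X` in
exactly two points (the extension of an edge of `K_X`). -/
def IsSide {S : Type} [DecidableEq S] (M : PSTS S) (X L : Finset S) : Prop :=
  L ∈ M.lines ∧ (L ∩ X).card = 2

instance {S : Type} [DecidableEq S] (M : PSTS S) (X L : Finset S) :
    Decidable (IsSide M X L) := by
  unfold IsSide; infer_instance

/-- The complete graph on the vertex set `X` is freely contained in `M`:
every edge of `K_X` extends to a (necessarily unique) line of `M` which meets
`X` in exactly two points (hence distinct edges extend to distinct lines), and
two distinct sides never meet outside `X`. -/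
def FreelyContains {S : Type} [DecidableEq S] (M : PSTS S) (X : Finset S) : Prop :=
  (∀ a ∈ X, ∀ b ∈ X, a ≠ b → ∃ L ∈ M.lines, a ∈ L ∧ b ∈ L ∧ (L ∩ X).card = 2) ∧
  (∀ L₁ L₂ : Finset S, IsSide M X L₁ → IsSide M X L₂ → L₁ ≠ L₂ →
    ∀ p, p ∈ L₁ → p ∈ L₂ → p ∈ X)

/-- `(Z,G)` is a B(m)-configuration regularly contained in `M` (a subspace):
the lines of `G` are lines of `M` lying in `Z`, every line of `M` meeting `Z`
in at least two points belongs to `G`, and `(Z,G)` has the binomial B(m) parameters. -/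
def RegularBinomialSub {S : Type} [DecidableEq S] (M : PSTS S)
    (Z : Finset S) (G : Finset (Finset S)) (m : ℕ) : Prop :=
  G ⊆ M.lines ∧ (∀ L ∈ G, L ⊆ Z) ∧
  (∀ L ∈ M.lines, 2 ≤ (L ∩ Z).card → L ∈ G) ∧
  Z.card = Nat.choose m 2 ∧ G.card = Nat.choose m 3 ∧
  ∀ p ∈ Z, (G.filter (fun L => p ∈ L)).card = m - 2

/-- The lines of the combinatorial Grassmannian G(Y,2): triples of 2-subsets
of `Y` contained in a common 3-subset. -/
def GrasLines (Y : Type) [Fintype Y] [DecidableEq Y] :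
    Finset (Finset {e : Finset Y // e.card = 2}) :=
  (Finset.univ.filter (fun f : Finset Y => f.card = 3)).image
    (fun f => Finset.univ.filter (fun e : {e : Finset Y // e.card = 2} => e.val ⊆ f))

/-- `M` freely contains exactly `m` complete `K_j`-graphs. -/
def ExactlyKGraphs {S : Type} [DecidableEq S] (M : PSTS S) (j m : ℕ) : Prop :=
  ∃ f : Fin m → Finset S, Function.Injective f ∧
    (∀ i, (f i).card = j ∧ FreelyContains M (f i)) ∧
    (∀ X : Finset S, X.card = j → FreelyContains M X → ∃ i, X = f i)

/-!
Every point of a B(n+1)-configuration has rank n - 1, so every line through a vertex of a freely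
contained K_n is a side. Hence the point `c` of `L₁` off `X₁` is not a vertex of `X₂`: otherwise
`L₁` would be a side of `X₂`, and its second vertex would lie in `X₁ ∩ X₂ = {p}`. The sides of `X₂`
cover all points off `X₂`, so `c` lies on a side `L₂` of `X₂`, unique since sides meet only in
vertices; and `p ∉ L₂`, for otherwise `L₂` would also be a side of `X₁` meeting `L₁` in `c ∉ X₁`.
-/

namespace PSTS

variable {S : Type} [DecidableEq S] (M : PSTS S)

lemma eq_of_two_le_card_inter {L L' : Finset S} (hL : L ∈ M.lines) (hL' : L' ∈ M.lines)
    (h : 2 ≤ (L ∩ L').card) : L = L' := by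
  obtain ⟨a, ha, b, hb, hab⟩ := one_lt_card.mp h
  rw [mem_inter] at ha hb
  exact M.unique L hL L' hL' a b hab ha.1 hb.1 ha.2 hb.2

def sides (X : Finset S) : Finset (Finset S) :=
  {L ∈ M.lines | (L ∩ X).card = 2}

variable {M}

@[simp]
lemma mem_sides {X L : Finset S} : L ∈ M.sides X ↔ IsSide M X L :=
  mem_filter

end PSTS

open PSTS

section Sides

variable {S : Type} [DecidableEq S] {M : PSTS S} {X L L' : Finset S}

lemma IsSide.card_sdiff (hL : IsSide M X L) : (L \ X).card = 1 := by
  have h3 := M.card3 L hL.1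
  have h2 := hL.2
  have := card_inter_add_card_sdiff L X
  omega

lemma IsSide.exists_sdiff_eq_singleton (hL : IsSide M X L) : ∃ c, L \ X = {c} :=
  card_eq_one.mp hL.card_sdiff

lemma FreelyContains.eq_of_mem_of_notMem (hf : FreelyContains M X) (hL : IsSide M X L)
    (hL' : IsSide M X L') {c : S} (hcL : c ∈ L) (hcL' : c ∈ L') (hc : c ∉ X) : L = L' := by
  by_contra hne
  exact hc (hf.2 L L' hL hL' hne c hcL hcL')

lemma FreelyContains.card_sides (hf : FreelyContains M X) :
    (M.sides X).card = X.card.choose 2 := by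
  rw [← card_powersetCard]
  refine card_nbij (· ∩ X) (fun L hL => ?_) (fun L hL L' hL' hLL' => ?_) ?_
  · exact mem_powersetCard.mpr ⟨inter_subset_right, (mem_sides.mp hL).2⟩
  · have hLL' : L ∩ X = L' ∩ X := hLL'
    have hL := mem_sides.mp hL
    have hL' := mem_sides.mp hL'
    refine M.eq_of_two_le_card_inter hL.1 hL'.1 ?_
    calc 2 = (L ∩ X).card := hL.2.symm
      _ ≤ (L ∩ L').card := card_le_card fun x hx => by
        have hx' : x ∈ L' ∩ X := hLL' ▸ hx
        exact mem_inter.mpr ⟨(mem_inter.mp hx).1, (mem_inter.mp hx').1⟩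
  · intro e he
    obtain ⟨heX, he2⟩ := mem_powersetCard.mp he
    obtain ⟨a, b, hab, rfl⟩ := card_eq_two.mp he2
    have haX : a ∈ X := heX (by simp)
    have hbX : b ∈ X := heX (by simp)
    obtain ⟨L, hL, haL, hbL, hLX⟩ := hf.1 a haX b hbX hab
    refine ⟨L, mem_sides.mpr ⟨hL, hLX⟩, ?_⟩
    refine (eq_of_subset_of_card_le ?_ (by rw [hLX, he2])).symm
    simp [insert_subset_iff, haL, hbL, haX, hbX]

/-- A vertex `x` lies on a side through each of the other `X.card - 1` vertices, so if its rank
is smaller than `X.card` these sides exhaust the lines through `x`. -/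
lemma FreelyContains.isSide_of_mem (hf : FreelyContains M X) {x : S} (hx : x ∈ X)
    (hrank : pointRank M x < X.card) (hL : L ∈ M.lines) (hxL : x ∈ L) : IsSide M X L := by
  set T := M.lines.filter (x ∈ ·)
  set T₂ := T.filter fun L => (L ∩ X).card = 2
  have hcover : X.erase x ⊆ T₂.biUnion fun L => (L ∩ X).erase x := by
    intro y hy
    obtain ⟨hyx, hyX⟩ := mem_erase.mp hy
    obtain ⟨L, hL, hxL, hyL, hLX⟩ := hf.1 x hx y hyX hyx.symm
    exact mem_biUnion.mpr ⟨L, by simp [T₂, T, hL, hxL, hLX], by simp [hyx, hyL, hyX]⟩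
  have hT₂ : T.card ≤ T₂.card := by
    have := (card_le_card hcover).trans card_biUnion_le
    have hone : ∀ L ∈ T₂, ((L ∩ X).erase x).card = 1 := fun L hL => by
      simp only [T₂, T, mem_filter] at hL
      rw [card_erase_of_mem (mem_inter.mpr ⟨hL.1.2, hx⟩), hL.2]
    rw [sum_congr rfl hone, card_erase_of_mem hx] at this
    simp only [sum_const, smul_eq_mul, mul_one] at this
    change T.card < X.card at hrank
    omega
  have hT₂T : T₂ = T := eq_of_subset_of_card_le (filter_subset _ T) hT₂
  have hLT : L ∈ T₂ := hT₂T ▸ mem_filter.mpr ⟨hL, hxL⟩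
  exact ⟨hL, (mem_filter.mp hLT).2⟩

/-- Each side has exactly one point off `X` and distinct sides share none, so when there are at
most `X.card.choose 2` such points every one of them lies on a side. -/
lemma FreelyContains.exists_isSide_mem [Fintype S] (hf : FreelyContains M X)
    (hcard : Fintype.card S ≤ (X.card + 1).choose 2) {c : S} (hc : c ∉ X) :
    ∃ L, IsSide M X L ∧ c ∈ L := by
  have hdisj : (M.sides X : Set (Finset S)).PairwiseDisjoint (· \ X) :=
    fun L hL L' hL' hne => disjoint_left.mpr fun u hu hu' => by
      rw [mem_sdiff] at hu hu'
      exact hne (hf.eq_of_mem_of_notMem (mem_sides.mp hL) (mem_sides.mp hL') hu.1 hu'.1 hu.2)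
  have hcover : univ \ X = (M.sides X).biUnion (· \ X) := by
    refine (eq_of_subset_of_card_le ?_ ?_).symm
    · intro u hu
      obtain ⟨L, -, huL⟩ := mem_biUnion.mp hu
      exact mem_sdiff.mpr ⟨mem_univ u, (mem_sdiff.mp huL).2⟩
    · have hchoose : (X.card + 1).choose 2 = X.card + X.card.choose 2 := by
        rw [Nat.choose_succ_succ', Nat.choose_one_right]
      rw [card_biUnion hdisj, sum_congr rfl fun L hL => (mem_sides.mp hL).card_sdiff,
        sum_const, smul_eq_mul, mul_one, hf.card_sides,
        card_sdiff_of_subset (subset_univ X), card_univ]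
      omega
  obtain ⟨L, hL, hcL⟩ := mem_biUnion.mp (hcover ▸ mem_sdiff.mpr ⟨mem_univ c, hc⟩)
  exact ⟨L, mem_sides.mp hL, (mem_sdiff.mp hcL).1⟩

end Sides

/-- If two freely contained K_n-graphs meet in the vertex p, then
every side of the first graph avoiding p crosses exactly one side of the second
graph avoiding p, the intersection point lying outside X₁ ∪ X₂. -/
theorem stmt_6 (n : ℕ) (S : Type) [Fintype S] [DecidableEq S] (M : PSTS S)
    (hM : IsBinomial M (n + 1)) (X₁ X₂ : Finset S)
    (h1 : X₁.card = n) (h2 : X₂.card = n)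
    (hf1 : FreelyContains M X₁) (hf2 : FreelyContains M X₂)
    (p : S) (hp : X₁ ∩ X₂ = {p}) :
    ∀ L₁ : Finset S, IsSide M X₁ L₁ → p ∉ L₁ →
      ∃! L₂ : Finset S, IsSide M X₂ L₂ ∧ p ∉ L₂ ∧
        ∃ u, u ∈ L₁ ∧ u ∈ L₂ ∧ u ∉ X₁ ∧ u ∉ X₂ := by
  intro L₁ hL₁ hpL₁
  have hpX₁ : p ∈ X₁ := (mem_inter.mp (hp ▸ mem_singleton_self p)).1
  have hrank : ∀ x, pointRank M x < n := fun x => by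
    have := card_pos.mpr ⟨p, hpX₁⟩
    rw [hM.2.2 x]; omega
  obtain ⟨c, hc⟩ := hL₁.exists_sdiff_eq_singleton
  have hcL₁ : c ∈ L₁ ∧ c ∉ X₁ := mem_sdiff.mp (hc ▸ mem_singleton_self c)
  have hcX₂ : c ∉ X₂ := fun hcX₂ => by
    have hL₁X₂ : L₁ ∩ X₂ ⊆ {c} := fun y hy => by
      obtain ⟨hyL₁, hyX₂⟩ := mem_inter.mp hy
      by_cases hyX₁ : y ∈ X₁
      · have : y = p := mem_singleton.mp (hp ▸ mem_inter.mpr ⟨hyX₁, hyX₂⟩)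
        exact absurd (this ▸ hyL₁) hpL₁
      · exact hc ▸ mem_sdiff.mpr ⟨hyL₁, hyX₁⟩
    have := card_le_card hL₁X₂
    rw [(hf2.isSide_of_mem hcX₂ (h2 ▸ hrank c) hL₁.1 hcL₁.1).2, card_singleton] at this
    omega
  obtain ⟨L₂, hL₂, hcL₂⟩ := hf2.exists_isSide_mem (h2 ▸ hM.1.le) hcX₂
  have hpL₂ : p ∉ L₂ := fun hpL₂ => hpL₁ <|
    hf1.eq_of_mem_of_notMem hL₁ (hf1.isSide_of_mem hpX₁ (h1 ▸ hrank p) hL₂.1 hpL₂)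
      hcL₁.1 hcL₂ hcL₁.2 ▸ hpL₂
  refine ⟨L₂, ⟨hL₂, hpL₂, c, hcL₁.1, hcL₂, hcL₁.2, hcX₂⟩, ?_⟩
  rintro L₂' ⟨hL₂', -, u, huL₁, huL₂', huX₁, -⟩
  obtain rfl : u = c := mem_singleton.mp (hc ▸ mem_sdiff.mpr ⟨huL₁, huX₁⟩)
  exact hf2.eq_of_mem_of_notMem hL₂' hL₂ huL₂' hcL₂ hcX₂
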